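/- arXiv:math/0601296 — 2 statements merged into one kernel-verified Lean document; each statement's English description precedes it below -/
import Mathlib

section
/- When all capacity requirements A_k equal 1, the fixed point system ρ_k = λ_k/(μ_k + γ_k B(ρ_1+…+ρ_K)), k = 1,…,K, has a unique solution (ρ_1,…,ρ_K) ∈ (0,∞)^K. -/
open Finset

/-- The Erlang blocking probability of an `M/M/C/C` queue with load `S`. -/
noncomputable def erlangB (C : ℕ) (S : ℝ) : ℝ :=
  (S ^ C / (Nat.factorial C : ℝ)) / ∑ l ∈ Finset.range (C + 1), S ^ l / (Nat.factorial l : ℝ)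


lemma denom_pos (C : ℕ) {S : ℝ} (hS : 0 ≤ S) :
    0 < ∑ l ∈ Finset.range (C + 1), S ^ l / (Nat.factorial l : ℝ) := by
  apply Finset.sum_pos'
  · intro i _; positivity
  · exact ⟨0, Finset.mem_range.mpr (Nat.succ_pos C), by norm_num⟩

lemma erlangB_nonneg (C : ℕ) {S : ℝ} (hS : 0 ≤ S) : 0 ≤ erlangB C S :=
  div_nonneg (by positivity) (denom_pos C hS).le

lemma erlangB_strictMono (C : ℕ) (hC : 0 < C) {S1 S2 : ℝ} (h1 : 0 < S1) (h12 : S1 < S2) :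
    erlangB C S1 < erlangB C S2 := by
  have h2 : 0 < S2 := h1.trans h12
  unfold erlangB
  rw [div_lt_div_iff₀ (denom_pos C h1.le) (denom_pos C h2.le)]
  have key : S1 ^ C * ∑ l ∈ Finset.range (C + 1), S2 ^ l / (Nat.factorial l : ℝ)
      < S2 ^ C * ∑ l ∈ Finset.range (C + 1), S1 ^ l / (Nat.factorial l : ℝ) := by
    rw [Finset.mul_sum, Finset.mul_sum]
    apply Finset.sum_lt_sum
    · intro i hi
      have hiC : i ≤ C := Nat.lt_succ_iff.mp (Finset.mem_range.mp hi)
      have e1 : S1 ^ C = S1 ^ (C - i) * S1 ^ i := by rw [← pow_add, Nat.sub_add_cancel hiC]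
      have e2 : S2 ^ C = S2 ^ (C - i) * S2 ^ i := by rw [← pow_add, Nat.sub_add_cancel hiC]
      have key2 : S1 ^ (C - i) ≤ S2 ^ (C - i) := pow_le_pow_left₀ h1.le h12.le _
      have ha : (0:ℝ) ≤ S1 ^ i * S2 ^ i / (Nat.factorial i : ℝ) := by positivity
      calc S1 ^ C * (S2 ^ i / (Nat.factorial i : ℝ))
          = S1 ^ (C - i) * (S1 ^ i * S2 ^ i / (Nat.factorial i : ℝ)) := by rw [e1]; ring
        _ ≤ S2 ^ (C - i) * (S1 ^ i * S2 ^ i / (Nat.factorial i : ℝ)) :=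
            mul_le_mul_of_nonneg_right key2 ha
        _ = S2 ^ C * (S1 ^ i / (Nat.factorial i : ℝ)) := by rw [e2]; ring
    · refine ⟨0, Finset.mem_range.mpr (Nat.succ_pos C), ?_⟩
      simp only [pow_zero, Nat.factorial_zero, Nat.cast_one]
      have : S1 ^ C < S2 ^ C := pow_lt_pow_left₀ h12 h1.le hC.ne'
      linarith
  have hCf : (0:ℝ) < (Nat.factorial C : ℝ) := by positivity
  rw [div_mul_eq_mul_div, div_mul_eq_mul_div, div_lt_div_iff_of_pos_right hCf]
  exact key

/-- When all capacity requirements equal `1`, the fixed point system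
`ρ_k = λ_k / (μ_k + γ_k B(ρ_1 + … + ρ_K))` has a unique solution in `(0, ∞)^K`. -/
theorem fixed_point_system_unique (K C : ℕ) (hK : 0 < K) (hC : 0 < C)
    (lam mu gam : Fin K → ℝ)
    (hlam : ∀ k, 0 < lam k) (hmu : ∀ k, 0 < mu k) (hgam : ∀ k, 0 < gam k) :
    ∃! ρ : Fin K → ℝ, (∀ k, 0 < ρ k) ∧
      ∀ k, ρ k = lam k / (mu k + gam k * erlangB C (∑ j, ρ j)) := by
  haveI : Nonempty (Fin K) := ⟨⟨0, hK⟩⟩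
  set Φ : ℝ → ℝ := fun S => ∑ k, lam k / (mu k + gam k * erlangB C S) with hΦdef
  -- denominators are positive for S ≥ 0
  have hden : ∀ (S : ℝ), 0 ≤ S → ∀ k, 0 < mu k + gam k * erlangB C S := by
    intro S hS k
    have := erlangB_nonneg C hS
    nlinarith [hmu k, hgam k]
  have hΦpos : ∀ S : ℝ, 0 ≤ S → 0 < Φ S := by
    intro S hS
    exact Finset.sum_pos (fun k _ => div_pos (hlam k) (hden S hS k)) Finset.univ_nonempty
  -- Φ strictly decreasing on positives
  have hΦanti : ∀ a b : ℝ, 0 < a → a < b → Φ b < Φ a := by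
    intro a b ha hab
    apply Finset.sum_lt_sum_of_nonempty Finset.univ_nonempty
    intro k _
    have hB : erlangB C a < erlangB C b := erlangB_strictMono C hC ha hab
    apply div_lt_div_of_pos_left (hlam k) (hden a ha.le k)
    nlinarith [hgam k]
  -- continuity of Φ on [0, M]
  have hcont : ContinuousOn Φ (Set.Ici (0:ℝ)) := by
    apply continuousOn_finset_sum
    intro k _
    apply ContinuousOn.div continuousOn_const
    · apply ContinuousOn.add continuousOn_const
      apply ContinuousOn.mul continuousOn_const
      unfold erlangB
      apply ContinuousOn.div
      · fun_prop
      · apply continuousOn_finset_sum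
        intro l _
        fun_prop
      · intro x hx
        exact (denom_pos C hx).ne'
    · intro x hx
      exact (hden x hx k).ne'
  -- existence of a fixed point S of Φ via IVT on g = Φ - id
  set M : ℝ := (∑ k, lam k / mu k) + 1 with hM
  have hM0 : (0:ℝ) ≤ M := by
    have h : 0 < ∑ k, lam k / mu k :=
      Finset.sum_pos (fun k _ => div_pos (hlam k) (hmu k)) Finset.univ_nonempty
    rw [hM]; linarith
  have hgcont : ContinuousOn (fun S => Φ S - S) (Set.Icc (0:ℝ) M) :=
    (hcont.mono Set.Icc_subset_Ici_self).sub continuousOn_id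
  have hg0 : 0 < Φ 0 - 0 := by simpa using hΦpos 0 le_rfl
  have hgM : Φ M - M < 0 := by
    have hle : Φ M ≤ ∑ k, lam k / mu k := by
      apply Finset.sum_le_sum
      intro k _
      apply div_le_div_of_nonneg_left (hlam k).le (hmu k)
      nlinarith [hgam k, erlangB_nonneg C hM0]
    simp only [hM]; linarith
  obtain ⟨S, hSmem, hSfix⟩ : ∃ S ∈ Set.Icc (0:ℝ) M, Φ S - S = 0 := by
    have := intermediate_value_Icc' hM0 hgcont
    have h0mem : (0:ℝ) ∈ Set.Icc (Φ M - M) (Φ 0 - 0) := ⟨hgM.le, hg0.le⟩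
    obtain ⟨S, hS, hS2⟩ := this h0mem
    exact ⟨S, hS, hS2⟩
  have hSeq : Φ S = S := by linarith
  have hSpos : 0 < S := hSeq ▸ hΦpos S hSmem.1
  -- the solution
  refine ⟨fun k => lam k / (mu k + gam k * erlangB C S), ⟨?_, ?_⟩, ?_⟩
  · intro k; exact div_pos (hlam k) (hden S hSpos.le k)
  · intro k
    have hsum : (∑ j, lam j / (mu j + gam j * erlangB C S)) = S := hSeq
    rw [hsum]
  · rintro ρ' ⟨hpos', heq'⟩
    set S' : ℝ := ∑ j, ρ' j with hS'
    have hS'pos : 0 < S' := Finset.sum_pos (fun k _ => hpos' k) Finset.univ_nonempty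
    have hS'fix : Φ S' = S' := by
      rw [hΦdef]
      simp only
      rw [hS']
      exact (Finset.sum_congr rfl (fun k _ => (heq' k).symm))
    have hSS' : S' = S := by
      rcases lt_trichotomy S' S with h | h | h
      · have := hΦanti S' S hS'pos h; rw [hSeq, hS'fix] at this; linarith
      · exact h
      · have := hΦanti S S' hSpos h; rw [hSeq, hS'fix] at this; linarith
    funext k
    rw [heq' k, hSS']
end

section
/- For any y in the interior of P(X) (all coordinates positive), ⟨V(y), ∇g(y)⟩ = ∑_{k=1}^K ∑_{n∈X, n_k≥1} F_n^k(y) log[((λ_k + γ_k⟨I_k,y⟩) y_{n−f_k}) / ((μ_k+γ_k) n_k y_n)] ≤ 0, where F_n^k(y) = (μ_k+γ_k) n_k y_n − (λ_k + γ_k⟨I_k,y⟩) y_{n−f_k}. -/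
open Finset

/-- The state space `X = {n ∈ ℕ^K : ∑_j A_j n_j ≤ C}` as a `Finset` of `Fin K → ℕ`. -/
def XF (K C : ℕ) (A : Fin K → ℕ) : Finset (Fin K → ℕ) :=
  (Fintype.piFinset fun _ => Finset.range (C + 1)).filter fun n => ∑ k, A k * n k ≤ C

/-- Extension of `y : X → ℝ` by `0` outside `X`. -/
noncomputable def ye (K C : ℕ) (A : Fin K → ℕ) (y : XF K C A → ℝ) (m : Fin K → ℕ) : ℝ :=
  if h : m ∈ XF K C A then y ⟨m, h⟩ else 0

/-- `⟨I_k, y⟩ = ∑_{m ∈ X} m_k y_m`. -/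
noncomputable def avgS (K C : ℕ) (A : Fin K → ℕ) (y : XF K C A → ℝ) (k : Fin K) : ℝ :=
  ∑ n : XF K C A, (n.1 k : ℝ) * y n

/-- The limiting vector field `V` on `P(X)`. -/
noncomputable def Vs (K C : ℕ) (A : Fin K → ℕ) (lam gam mu : Fin K → ℝ)
    (y : XF K C A → ℝ) (n : XF K C A) : ℝ :=
  (∑ k, (lam k + gam k * avgS K C A y k) *
      ((if 1 ≤ n.1 k then ye K C A y (n.1 - Pi.single k 1) else 0)
        - (if n.1 + Pi.single k 1 ∈ XF K C A then y n else 0)))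
  + ∑ k, (gam k + mu k) *
      (((n.1 k : ℝ) + 1) *
          (if n.1 + Pi.single k 1 ∈ XF K C A then ye K C A y (n.1 + Pi.single k 1) else 0)
        - (n.1 k : ℝ) * y n)

/-- The energy function
`g(y) = ∑_{n∈X} y_n log(n! y_n) − ∑_k ∫_0^{⟨I_k,y⟩} log((λ_k+γ_k x)/(μ_k+γ_k)) dx`. -/
noncomputable def gE (K C : ℕ) (A : Fin K → ℕ) (lam gam mu : Fin K → ℝ)
    (y : XF K C A → ℝ) : ℝ :=
  (∑ n : XF K C A, y n * Real.log ((∏ k, (Nat.factorial (n.1 k) : ℝ)) * y n))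
  - ∑ k, ∫ x in (0:ℝ)..(avgS K C A y k), Real.log ((lam k + gam k * x) / (mu k + gam k))

/-- `F_n^k(y) = (μ_k+γ_k) n_k y_n − (λ_k + γ_k⟨I_k,y⟩) y_{n−f_k}`. -/
noncomputable def FE (K C : ℕ) (A : Fin K → ℕ) (lam gam mu : Fin K → ℝ)
    (y : XF K C A → ℝ) (k : Fin K) (n : XF K C A) : ℝ :=
  (mu k + gam k) * (n.1 k : ℝ) * y n
    - (lam k + gam k * avgS K C A y k) * ye K C A y (n.1 - Pi.single k 1)

/-!
The gradient of `g` is `∂g/∂y_n = log(n! y_n) + 1 - ∑_k n_k log((λ_k+γ_k⟨I_k,y⟩)/(μ_k+γ_k))`.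
The field `V_n` is the net inflow `∑_k (F^k_{n+f_k} - F^k_n)` of the birth–death fluxes `F^k_n`
across the edges between `n - f_k` and `n`, so summation by parts turns `⟨V, ∇g⟩` into
`∑_{k,n} F^k_n (∂_{n-f_k} g - ∂_n g)`. Since `n!/(n-f_k)! = n_k`, each gradient difference is
exactly `log((λ_k+γ_k⟨I_k,y⟩) y_{n-f_k} / ((μ_k+γ_k) n_k y_n))`, and every summand has the form
`(b - a) log(a/b) ≤ 0`.
-/

section LatticeShift

variable {ι : Type*} [DecidableEq ι]

lemma Pi.single_le_iff {n : ι → ℕ} {k : ι} {a : ℕ} : Pi.single k a ≤ n ↔ a ≤ n k := by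
  refine ⟨fun h => by simpa using h k, fun h j => ?_⟩
  rcases eq_or_ne j k with rfl | hj
  · simpa using h
  · simp [hj]

variable [Fintype ι]

lemma sum_filter_add_single_mem {M : Type*} [AddCommMonoid M] {S : Finset (ι → ℕ)} {k : ι}
    (hS : ∀ n ∈ S, n - Pi.single k 1 ∈ S) (φ : (ι → ℕ) → (ι → ℕ) → M) :
    ∑ m ∈ S with m + Pi.single k 1 ∈ S, φ (m + Pi.single k 1) m
      = ∑ n ∈ S with 1 ≤ n k, φ n (n - Pi.single k 1) := by
  refine Finset.sum_nbij' (· + Pi.single k 1) (· - Pi.single k 1) ?_ ?_ ?_ ?_ ?_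
  · intro m hm
    simp_all
  · intro n hn
    simp only [mem_filter] at hn ⊢
    rw [tsub_add_cancel_of_le (Pi.single_le_iff.2 hn.2)]
    exact ⟨hS n hn.1, hn.1⟩
  · intro m _
    simp
  · intro n hn
    exact tsub_add_cancel_of_le (Pi.single_le_iff.2 (mem_filter.1 hn).2)
  · intro m _
    simp

/-- Discrete divergence theorem along the coordinate `k`: `F n` is the flux through the edge
between `n - e_k` and `n`. -/
lemma sum_flux_divergence_mul {R : Type*} [Ring R] {S : Finset (ι → ℕ)} {k : ι}
    (hS : ∀ n ∈ S, n - Pi.single k 1 ∈ S) (F G : (ι → ℕ) → R) :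
    ∑ m ∈ S, ((if m + Pi.single k 1 ∈ S then F (m + Pi.single k 1) else 0)
        - (if 1 ≤ m k then F m else 0)) * G m
      = ∑ n ∈ S with 1 ≤ n k, F n * (G (n - Pi.single k 1) - G n) := by
  simp only [sub_mul, ite_mul, zero_mul, sum_sub_distrib, ← sum_filter, mul_sub]
  rw [sum_filter_add_single_mem hS (fun n m => F n * G m)]

lemma prod_factorial_eq_mul_prod_factorial_sub_single {n : ι → ℕ} {k : ι} (h : 1 ≤ n k) :
    ∏ j, (n j).factorial = n k * ∏ j, ((n - Pi.single k 1 : ι → ℕ) j).factorial := by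
  rw [← mul_prod_erase univ _ (mem_univ k)]
  conv_rhs => rw [← mul_prod_erase univ _ (mem_univ k)]
  have hoff : ∀ j ∈ univ.erase k, ((n - Pi.single k 1 : ι → ℕ) j).factorial = (n j).factorial :=
    fun j hj => by simp [ne_of_mem_erase hj]
  rw [prod_congr rfl hoff, ← mul_assoc]
  simp [Nat.mul_factorial_pred (Nat.one_le_iff_ne_zero.1 h)]

lemma sum_natCast_mul_eq_add_sum_sub_single {R : Type*} [CommRing R] {n : ι → ℕ} {k : ι}
    (h : 1 ≤ n k) (L : ι → R) :
    ∑ j, (n j : R) * L j = L k + ∑ j, ((n - Pi.single k 1 : ι → ℕ) j : R) * L j := by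
  simp only [Pi.sub_apply, Nat.cast_sub (Pi.single_le_iff.2 h _), sub_mul, sum_sub_distrib]
  simp [Pi.single_apply]

end LatticeShift

lemma sub_mul_log_div_nonpos {a b : ℝ} (ha : 0 < a) (hb : 0 < b) :
    (b - a) * Real.log (a / b) ≤ 0 := by
  rcases le_total a b with hab | hab
  · exact mul_nonpos_of_nonneg_of_nonpos (sub_nonneg.2 hab)
      (Real.log_nonpos (div_nonneg ha.le hb.le) ((div_le_one hb).2 hab))
  · exact mul_nonpos_of_nonpos_of_nonneg (sub_nonpos.2 hab)
      (Real.log_nonneg ((one_le_div hb).2 hab))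

lemma hasDerivAt_mul_log_const_mul {c t : ℝ} (hc : c ≠ 0) (ht : t ≠ 0) :
    HasDerivAt (fun t => t * Real.log (c * t)) (Real.log (c * t) + 1) t := by
  have hlog : HasDerivAt (fun t => Real.log (c * t)) (c / (c * t)) t := by
    simpa using ((hasDerivAt_id' t).const_mul c).log (mul_ne_zero hc ht)
  exact ((hasDerivAt_id' t).mul hlog).congr_deriv (by field_simp)

lemma hasDerivAt_integral_of_continuousOn {E : Type*} [NormedAddCommGroup E] [NormedSpace ℝ E]
    [CompleteSpace E] {f : ℝ → E} {U : Set ℝ} {a b : ℝ} (hU : IsOpen U) (hf : ContinuousOn f U)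
    (hab : Set.uIcc a b ⊆ U) : HasDerivAt (fun u => ∫ x in a..u, f x) (f b) b :=
  have hb : b ∈ U := hab Set.right_mem_uIcc
  intervalIntegral.integral_hasDerivAt_right ((hf.mono hab).intervalIntegrable)
    (hf.stronglyMeasurableAtFilter hU b hb) (hf.continuousAt (hU.mem_nhds hb))

lemma hasDerivAt_integral_log_affine_div {p q d a : ℝ} (hp : 0 < p) (hq : 0 ≤ q) (hd : d ≠ 0)
    (ha : 0 ≤ a) :
    HasDerivAt (fun t => ∫ x in (0:ℝ)..t, Real.log ((p + q * x) / d))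
      (Real.log ((p + q * a) / d)) a := by
  refine hasDerivAt_integral_of_continuousOn (U := {x | 0 < p + q * x})
    (isOpen_lt continuous_const (by fun_prop))
    ((by fun_prop : Continuous fun x => (p + q * x) / d).continuousOn.log
      fun x hx => div_ne_zero (ne_of_gt hx) hd) ?_
  rw [Set.uIcc_of_le ha]
  intro x hx
  exact add_pos_of_pos_of_nonneg hp (mul_nonneg hq hx.1)

section Model

variable {K C : ℕ} {A : Fin K → ℕ}

lemma ye_coe (y : XF K C A → ℝ) (n : XF K C A) : ye K C A y n.1 = y n := by
  simp [ye]

lemma ye_pos {y : XF K C A → ℝ} (hy : ∀ n, 0 < y n) {m : Fin K → ℕ} (hm : m ∈ XF K C A) :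
    0 < ye K C A y m := by
  simpa [ye, hm] using hy ⟨m, hm⟩

lemma sub_single_mem_XF {n : Fin K → ℕ} (hn : n ∈ XF K C A) (k : Fin K) :
    n - Pi.single k 1 ∈ XF K C A := by
  simp only [XF, mem_filter, Fintype.mem_piFinset, mem_range] at hn ⊢
  exact ⟨fun j => (Nat.sub_le _ _).trans_lt (hn.1 j),
    (sum_le_sum fun j _ => Nat.mul_le_mul_left _ (Nat.sub_le _ _)).trans hn.2⟩

lemma avgS_nonneg {y : XF K C A → ℝ} (hy : ∀ n, 0 ≤ y n) (k : Fin K) : 0 ≤ avgS K C A y k :=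
  sum_nonneg fun n _ => mul_nonneg (Nat.cast_nonneg _) (hy n)

noncomputable def flux (K C : ℕ) (A : Fin K → ℕ) (lam gam mu : Fin K → ℝ) (y : XF K C A → ℝ)
    (k : Fin K) (m : Fin K → ℕ) : ℝ :=
  (mu k + gam k) * (m k : ℝ) * ye K C A y m
    - (lam k + gam k * avgS K C A y k) * ye K C A y (m - Pi.single k 1)

variable (lam gam mu : Fin K → ℝ) (y : XF K C A → ℝ)

lemma FE_eq_flux (k : Fin K) (n : XF K C A) :
    FE K C A lam gam mu y k n = flux K C A lam gam mu y k n.1 := by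
  rw [FE, flux, ye_coe]

lemma Vs_eq_sum_flux (n : XF K C A) :
    Vs K C A lam gam mu y n = ∑ k,
      ((if n.1 + Pi.single k 1 ∈ XF K C A then flux K C A lam gam mu y k (n.1 + Pi.single k 1)
          else 0)
        - (if 1 ≤ n.1 k then flux K C A lam gam mu y k n.1 else 0)) := by
  rw [Vs, ← sum_add_distrib]
  refine sum_congr rfl fun k _ => ?_
  have hn : n.1 k = 0 ∨ 1 ≤ n.1 k := by omega
  rcases hn with hn | hn <;> split_ifs <;> simp_all [flux, ye_coe] <;> ring

lemma sum_Vs_mul (G : (Fin K → ℕ) → ℝ) :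
    ∑ n : XF K C A, Vs K C A lam gam mu y n * G n.1
      = ∑ k, ∑ n ∈ univ.filter (fun n : XF K C A => 1 ≤ n.1 k),
          FE K C A lam gam mu y k n * (G (n.1 - Pi.single k 1) - G n.1) := by
  simp_rw [Vs_eq_sum_flux, sum_mul]
  rw [sum_comm]
  refine sum_congr rfl fun k _ => ?_
  set F := flux K C A lam gam mu y k
  calc ∑ n : XF K C A, ((if n.1 + Pi.single k 1 ∈ XF K C A then F (n.1 + Pi.single k 1) else 0)
          - (if 1 ≤ n.1 k then F n.1 else 0)) * G n.1
      = ∑ m ∈ XF K C A, ((if m + Pi.single k 1 ∈ XF K C A then F (m + Pi.single k 1) else 0)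
          - (if 1 ≤ m k then F m else 0)) * G m := by rw [← sum_coe_sort (XF K C A)]
    _ = ∑ m ∈ XF K C A with 1 ≤ m k, F m * (G (m - Pi.single k 1) - G m) :=
      sum_flux_divergence_mul (fun n hn => sub_single_mem_XF hn k) F G
    _ = _ := by
      rw [sum_filter, sum_filter, ← sum_coe_sort (XF K C A)]
      simp_rw [FE_eq_flux, F]

noncomputable def energyGrad (m : Fin K → ℕ) : ℝ :=
  Real.log ((∏ k, ((m k).factorial : ℝ)) * ye K C A y m) + 1
    - ∑ k, (m k : ℝ) * Real.log ((lam k + gam k * avgS K C A y k) / (mu k + gam k))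

variable {lam gam mu y}

lemma fderiv_gE_apply_single (hlam : ∀ k, 0 < lam k) (hgam : ∀ k, 0 ≤ gam k)
    (hmg : ∀ k, 0 < mu k + gam k) (hy : ∀ n, 0 < y n) (n : XF K C A) :
    fderiv ℝ (gE K C A lam gam mu) y (Pi.single n 1) = energyGrad lam gam mu y n.1 := by
  have hc : ∀ m : XF K C A, ∏ k, ((m.1 k).factorial : ℝ) ≠ 0 := fun m =>
    (prod_pos fun k _ => Nat.cast_pos.2 (Nat.factorial_pos _)).ne'
  have havgS : ∀ k, HasFDerivAt (𝕜 := ℝ) (fun y => avgS K C A y k)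
      (∑ m : XF K C A, (m.1 k : ℝ) • ContinuousLinearMap.proj m) y := fun k =>
    HasFDerivAt.fun_sum fun m _ => (hasFDerivAt_apply m y).const_mul (m.1 k : ℝ)
  have hgE : HasFDerivAt (𝕜 := ℝ) (gE K C A lam gam mu)
      ((∑ m : XF K C A, (Real.log ((∏ k, ((m.1 k).factorial : ℝ)) * y m) + 1)
          • ContinuousLinearMap.proj m)
        - ∑ k, Real.log ((lam k + gam k * avgS K C A y k) / (mu k + gam k))
          • ∑ m : XF K C A, (m.1 k : ℝ) • ContinuousLinearMap.proj m) y :=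
    (HasFDerivAt.fun_sum fun m _ => HasDerivAt.comp_hasFDerivAt (f := fun y => y m) y
        (hasDerivAt_mul_log_const_mul (hc m) (hy m).ne') (hasFDerivAt_apply m y)).sub
      (HasFDerivAt.fun_sum fun k _ => HasDerivAt.comp_hasFDerivAt (f := fun y => avgS K C A y k) y
        (hasDerivAt_integral_log_affine_div (hlam k) (hgam k) (hmg k).ne'
          (avgS_nonneg (fun n => (hy n).le) k)) (havgS k))
  rw [hgE.fderiv]
  simp [energyGrad, ye_coe, Pi.single_apply, mul_comm]

lemma energyGrad_sub_single_sub_energyGrad (hy : ∀ n, 0 < y n) {k : Fin K}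
    (ha : 0 < lam k + gam k * avgS K C A y k) (hb : 0 < mu k + gam k) {n : XF K C A}
    (hn : 1 ≤ n.1 k) :
    energyGrad lam gam mu y (n.1 - Pi.single k 1) - energyGrad lam gam mu y n.1
      = Real.log ((lam k + gam k * avgS K C A y k) * ye K C A y (n.1 - Pi.single k 1)
          / ((mu k + gam k) * (n.1 k : ℝ) * y n)) := by
  have hfact := congrArg (Nat.cast (R := ℝ)) (prod_factorial_eq_mul_prod_factorial_sub_single hn)
  push_cast at hfact
  rw [energyGrad, energyGrad, hfact, ye_coe, sum_natCast_mul_eq_add_sum_sub_single hn]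
  set P := ∏ j, (((n.1 - Pi.single k 1 : Fin K → ℕ) j).factorial : ℝ)
  set Y' := ye K C A y (n.1 - Pi.single k 1)
  have hP : 0 < P := prod_pos fun j _ => Nat.cast_pos.2 (Nat.factorial_pos _)
  have hY' : 0 < Y' := ye_pos hy (sub_single_mem_XF n.2 k)
  have hnk : (0 : ℝ) < n.1 k := by exact_mod_cast hn
  have hyn := hy n
  calc _ = Real.log (P * Y') - Real.log (n.1 k * P * y n)
          + Real.log ((lam k + gam k * avgS K C A y k) / (mu k + gam k)) := by ring
    _ = _ := by
      rw [← Real.log_div (by positivity) (by positivity),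
        ← Real.log_mul (by positivity) (div_pos ha hb).ne']
      congr 1
      field_simp

lemma lam_add_gam_mul_avgS_pos (hlam : ∀ k, 0 < lam k) (hgam : ∀ k, 0 ≤ gam k)
    (hy : ∀ n, 0 < y n) (k : Fin K) : 0 < lam k + gam k * avgS K C A y k :=
  add_pos_of_pos_of_nonneg (hlam k) (mul_nonneg (hgam k) (avgS_nonneg (fun n => (hy n).le) k))

lemma sum_Vs_mul_fderiv_gE (hlam : ∀ k, 0 < lam k) (hgam : ∀ k, 0 ≤ gam k)
    (hmg : ∀ k, 0 < mu k + gam k) (hy : ∀ n, 0 < y n) :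
    ∑ n : XF K C A, Vs K C A lam gam mu y n * fderiv ℝ (gE K C A lam gam mu) y (Pi.single n 1)
      = ∑ k, ∑ n ∈ univ.filter (fun n : XF K C A => 1 ≤ n.1 k),
          FE K C A lam gam mu y k n *
            Real.log ((lam k + gam k * avgS K C A y k) * ye K C A y (n.1 - Pi.single k 1) /
              ((mu k + gam k) * (n.1 k : ℝ) * y n)) := by
  simp_rw [fderiv_gE_apply_single hlam hgam hmg hy, sum_Vs_mul]
  refine sum_congr rfl fun k _ => sum_congr rfl fun n hn => ?_
  rw [energyGrad_sub_single_sub_energyGrad hy (lam_add_gam_mul_avgS_pos hlam hgam hy k) (hmg k)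
    (mem_filter.1 hn).2]

end Model

theorem lyapunov_identity_general (K C : ℕ)
    (A : Fin K → ℕ)
    (lam gam mu : Fin K → ℝ)
    (hlam : ∀ k, 0 < lam k) (hgam : ∀ k, 0 ≤ gam k)
    (hmg : ∀ k, 0 < mu k + gam k)
    (y : XF K C A → ℝ) (hy : ∀ n, 0 < y n) :
    (∑ n : XF K C A, Vs K C A lam gam mu y n *
        fderiv ℝ (gE K C A lam gam mu) y (Pi.single n 1)) =
      (∑ k, ∑ n ∈ Finset.univ.filter (fun n : XF K C A => 1 ≤ n.1 k),
        FE K C A lam gam mu y k n *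
          Real.log ((lam k + gam k * avgS K C A y k) * ye K C A y (n.1 - Pi.single k 1) /
            ((mu k + gam k) * (n.1 k : ℝ) * y n))) ∧
    (∑ n : XF K C A, Vs K C A lam gam mu y n *
        fderiv ℝ (gE K C A lam gam mu) y (Pi.single n 1)) ≤ 0 := by
  have hident := sum_Vs_mul_fderiv_gE hlam hgam hmg hy
  refine ⟨hident, hident ▸ sum_nonpos fun k _ => sum_nonpos fun n hn => ?_⟩
  have hnk : (0 : ℝ) < n.1 k := by exact_mod_cast (mem_filter.1 hn).2
  exact sub_mul_log_div_nonpos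
    (mul_pos (lam_add_gam_mul_avgS_pos hlam hgam hy k) (ye_pos hy (sub_single_mem_XF n.2 k)))
    (mul_pos (mul_pos (hmg k) hnk) (hy n))

/-- For `y` in the interior of `P(X)`,
`⟨V(y), ∇g(y)⟩ = ∑_k ∑_{n : n_k ≥ 1} F_n^k(y) log(((λ_k+γ_k⟨I_k,y⟩)y_{n−f_k})/((μ_k+γ_k)n_k y_n)) ≤ 0`. -/
theorem lyapunov_identity (K C : ℕ) (hK : 0 < K) (hC : 0 < C)
    (A : Fin K → ℕ) (hA : ∀ k, 0 < A k)
    (lam gam mu : Fin K → ℝ)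
    (hlam : ∀ k, 0 < lam k) (hgam : ∀ k, 0 ≤ gam k) (hmu : ∀ k, 0 ≤ mu k)
    (hmg : ∀ k, 0 < mu k + gam k)
    (y : XF K C A → ℝ) (hy : ∀ n, 0 < y n) (hysum : ∑ n : XF K C A, y n = 1) :
    (∑ n : XF K C A, Vs K C A lam gam mu y n *
        fderiv ℝ (gE K C A lam gam mu) y (Pi.single n 1)) =
      (∑ k, ∑ n ∈ Finset.univ.filter (fun n : XF K C A => 1 ≤ n.1 k),
        FE K C A lam gam mu y k n *
          Real.log ((lam k + gam k * avgS K C A y k) * ye K C A y (n.1 - Pi.single k 1) /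
            ((mu k + gam k) * (n.1 k : ℝ) * y n))) ∧
    (∑ n : XF K C A, Vs K C A lam gam mu y n *
        fderiv ℝ (gE K C A lam gam mu) y (Pi.single n 1)) ≤ 0 :=
  lyapunov_identity_general K C A lam gam mu hlam hgam hmg y hy
end
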